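/- Let R be a commutative ring and M a nonzero R-module whose endomorphism condition holds: for each r ∈ R, multiplication by r on M is zero or bijective. Assume furthermore M is finitely generated over R and contains an element with annihilator equal to Ann_R(M). Then R/Ann_R(M) is a field or a positive-dimensional domain; and in the latter case, multiplication by every nonzero class r̄ ∈ R/Ann_R(M) on M is bijective, forcing M ⊗_R R/(r) = 0 for some non-unit r ∉ Ann_R(M), contradicting Supp(M) = V(Ann_R(M)). Hence R/Ann_R(M) is a field, i.e., Ann_R(M) is maximal. -/

import Mathlib

/-! An element `x ∉ Ann_R(M)` acts bijectively on `M`, so `M = x • M`; by Nakayama's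
lemma some `r ≡ 1 (mod x)` kills `M`, i.e. `Ann_R(M) + (x) = R`. Hence every ideal strictly
containing `Ann_R(M)` is the unit ideal, while `Ann_R(M) ≠ R` because `M ≠ 0`. -/

theorem Ideal.isMaximal_of_sup_span_singleton_eq_top {R : Type*} [CommSemiring R] {I : Ideal R}
    (hI : I ≠ ⊤) (h : ∀ x ∉ I, I ⊔ Ideal.span {x} = ⊤) : I.IsMaximal := by
  refine Ideal.isMaximal_def.mpr ⟨hI, fun J hIJ => ?_⟩
  obtain ⟨x, hxJ, hxI⟩ := SetLike.exists_of_lt hIJ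
  rw [eq_top_iff, ← h x hxI]
  exact sup_le hIJ.le ((Ideal.span_singleton_le_iff_mem J).mpr hxJ)

namespace Module

variable {R M : Type*} [CommRing R] [AddCommGroup M] [Module R M] [Module.Finite R M]

theorem annihilator_sup_eq_top_of_le_smul {I : Ideal R} (hI : (⊤ : Submodule R M) ≤ I • ⊤) :
    annihilator R M ⊔ I = ⊤ := by
  obtain ⟨r, hr1, hr⟩ :=
    Submodule.exists_sub_one_mem_and_smul_eq_zero_of_fg_of_le_smul I ⊤ Module.Finite.fg_top hI
  have hr_ann : r ∈ annihilator R M := mem_annihilator.mpr fun m => hr m trivial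
  rw [Ideal.eq_top_iff_one]
  simpa using Submodule.sub_mem_sup hr_ann hr1

theorem annihilator_sup_span_singleton_eq_top_of_surjective {r : R}
    (hr : Function.Surjective (fun m : M => r • m)) : annihilator R M ⊔ Ideal.span {r} = ⊤ :=
  annihilator_sup_eq_top_of_le_smul fun m _ => by
    obtain ⟨n, rfl⟩ := hr m
    exact Submodule.smul_mem_smul (Ideal.mem_span_singleton_self r) trivial

end Module

theorem stmt14_general {R M : Type*} [CommRing R] [AddCommGroup M] [Module R M] [Nontrivial M]
    [Module.Finite R M]
    (h : ∀ r : R, (∀ m : M, r • m = 0) ∨ Function.Bijective (fun m : M => r • m)) :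
    (Module.annihilator R M).IsMaximal := by
  have hne_top : Module.annihilator R M ≠ ⊤ := by
    rw [Ne, Module.annihilator_eq_top_iff]
    exact not_subsingleton M
  refine Ideal.isMaximal_of_sup_span_singleton_eq_top hne_top fun x hx => ?_
  have hbij : Function.Bijective (fun m : M => x • m) :=
    (h x).resolve_left fun hzero => hx (Module.mem_annihilator.mpr hzero)
  exact Module.annihilator_sup_span_singleton_eq_top_of_surjective hbij.2

/-- Let `M` be a nonzero finitely generated module over a commutative ring `R` such that
every `r : R` acts on `M` by zero or bijectively, and suppose `M` contains an element
whose annihilator is exactly `Ann_R(M)`. Then `Ann_R(M)` is a maximal ideal. -/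
theorem stmt14 {R M : Type*} [CommRing R] [AddCommGroup M] [Module R M] [Nontrivial M]
    [Module.Finite R M]
    (h : ∀ r : R, (∀ m : M, r • m = 0) ∨ Function.Bijective (fun m : M => r • m))
    (hel : ∃ m : M, Ideal.torsionOf R M m = Module.annihilator R M) :
    (Module.annihilator R M).IsMaximal :=
  stmt14_general h
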